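/- The tensor commutation matrix 3⊗2 is given in terms of the Gell-Mann matrices λ₁,…,λ₈ and Pauli matrices σ₁,σ₂,σ₃ by: U_{3⊗2} = ((1/3)I₃ + (1/2)λ₃ + (√3/6)λ₈) ⊗ ((1/2)I₂ + (1/2)σ₃) + ((1/2)λ₁ + (i/2)λ₂) ⊗ ((1/2)σ₁ − (i/2)σ₂) + ((1/2)λ₆ + (i/2)λ₇) ⊗ ((1/2)I₂ + (1/2)σ₃) + ((1/2)λ₁ − (i/2)λ₂) ⊗ ((1/2)I₂ − (1/2)σ₃) + ((1/2)λ₆ − (i/2)λ₇) ⊗ ((1/2)σ₁ + (i/2)σ₂) + ((1/3)I₃ − (√3/3)λ₈) ⊗ ((1/2)I₂ − (1/2)σ₃). -/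

import Mathlib

open Matrix

noncomputable def pauli1 : Matrix (Fin 2) (Fin 2) ℂ := !![0, 1; 1, 0]
noncomputable def pauli2 : Matrix (Fin 2) (Fin 2) ℂ := !![0, -Complex.I; Complex.I, 0]
noncomputable def pauli3 : Matrix (Fin 2) (Fin 2) ℂ := !![1, 0; 0, -1]

noncomputable def gm1 : Matrix (Fin 3) (Fin 3) ℂ :=
  Matrix.single 0 1 1 + Matrix.single 1 0 1
noncomputable def gm2 : Matrix (Fin 3) (Fin 3) ℂ :=
  (-Complex.I) • Matrix.single 0 1 1 + Complex.I • Matrix.single 1 0 1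
noncomputable def gm3 : Matrix (Fin 3) (Fin 3) ℂ :=
  Matrix.single 0 0 1 - Matrix.single 1 1 1
noncomputable def gm6 : Matrix (Fin 3) (Fin 3) ℂ :=
  Matrix.single 1 2 1 + Matrix.single 2 1 1
noncomputable def gm7 : Matrix (Fin 3) (Fin 3) ℂ :=
  (-Complex.I) • Matrix.single 1 2 1 + Complex.I • Matrix.single 2 1 1
noncomputable def gm8 : Matrix (Fin 3) (Fin 3) ℂ :=
  ((Real.sqrt 3 : ℝ) : ℂ)⁻¹ •
    (Matrix.single 0 0 1 + Matrix.single 1 1 1 - (2 : ℂ) • Matrix.single 2 2 1)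

/-- The Kronecker product `A ⊗ B` of a 3×3 matrix with a 2×2 matrix, realized
as a 6×6 matrix with rows and columns flattened lexicographically:
`(A ⊗ B)_{(i₁,i₂),(j₁,j₂)} = A_{i₁ j₁} B_{i₂ j₂}` at row `2·i₁+i₂`,
column `2·j₁+j₂` (zero-based). -/
noncomputable def kron32 (A : Matrix (Fin 3) (Fin 3) ℂ) (B : Matrix (Fin 2) (Fin 2) ℂ) :
    Matrix (Fin 6) (Fin 6) ℂ :=
  Matrix.of fun r s =>
    A ⟨(r : ℕ) / 2, by have := r.isLt; omega⟩ ⟨(s : ℕ) / 2, by have := s.isLt; omega⟩ *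
      B ⟨(r : ℕ) % 2, by omega⟩ ⟨(s : ℕ) % 2, by omega⟩

/-- The Kronecker product `a ⊗ b ∈ ℂ⁶` of column vectors `a ∈ ℂ³`, `b ∈ ℂ²`. -/
noncomputable def vecKron32 (a : Fin 3 → ℂ) (b : Fin 2 → ℂ) : Fin 6 → ℂ :=
  fun r => a ⟨(r : ℕ) / 2, by have := r.isLt; omega⟩ * b ⟨(r : ℕ) % 2, by omega⟩

/-- The Kronecker product `a ⊗ b ∈ ℂ⁶` of column vectors `a ∈ ℂ²`, `b ∈ ℂ³`. -/
noncomputable def vecKron23 (a : Fin 2 → ℂ) (b : Fin 3 → ℂ) : Fin 6 → ℂ :=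
  fun r => a ⟨(r : ℕ) / 3, by have := r.isLt; omega⟩ * b ⟨(r : ℕ) % 3, by omega⟩


/-! Each Gell-Mann and Pauli combination in the formula is a matrix unit, so the right-hand side
is `E₀₀ ⊗ E₀₀ + E₀₁ ⊗ E₁₀ + E₁₂ ⊗ E₀₀ + E₁₀ ⊗ E₁₁ + E₂₁ ⊗ E₀₁ + E₂₂ ⊗ E₁₁`. By the mixed-product
rule it sends `a ⊗ b` to `b ⊗ a`, and a matrix is determined by its values on product vectors,
since these include the standard basis `eᵢ ⊗ eₖ`. -/

lemma vecKron32_finProdFinEquiv (a : Fin 3 → ℂ) (b : Fin 2 → ℂ) (i : Fin 3) (k : Fin 2) :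
    vecKron32 a b (finProdFinEquiv (i, k)) = a i * b k := by
  fin_cases i <;> fin_cases k <;> rfl

lemma kron32_finProdFinEquiv (A : Matrix (Fin 3) (Fin 3) ℂ) (B : Matrix (Fin 2) (Fin 2) ℂ)
    (i j : Fin 3) (k l : Fin 2) :
    kron32 A B (finProdFinEquiv (i, k)) (finProdFinEquiv (j, l)) = A i j * B k l := by
  simp only [kron32, of_apply, finProdFinEquiv_apply_val]
  congr 2 <;> ext <;> simp only <;> omega

lemma vecKron32_single_one (i : Fin 3) (k : Fin 2) :
    vecKron32 (Pi.single i 1) (Pi.single k 1) = Pi.single (finProdFinEquiv (i, k)) 1 := by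
  funext r
  obtain ⟨⟨i', k'⟩, rfl⟩ := (finProdFinEquiv : Fin 3 × Fin 2 ≃ Fin 6).surjective r
  rw [vecKron32_finProdFinEquiv]
  simp [Pi.single_apply, ← ite_and, and_comm]

theorem ext_of_mulVec_vecKron32 {U V : Matrix (Fin 6) (Fin 6) ℂ}
    (h : ∀ a b, U *ᵥ vecKron32 a b = V *ᵥ vecKron32 a b) : U = V := by
  refine ext_of_mulVec_single fun s => ?_
  obtain ⟨⟨i, k⟩, rfl⟩ := (finProdFinEquiv : Fin 3 × Fin 2 ≃ Fin 6).surjective s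
  rw [← vecKron32_single_one, h]

theorem kron32_mulVec_vecKron32 (A : Matrix (Fin 3) (Fin 3) ℂ) (B : Matrix (Fin 2) (Fin 2) ℂ)
    (a : Fin 3 → ℂ) (b : Fin 2 → ℂ) :
    kron32 A B *ᵥ vecKron32 a b = vecKron32 (A *ᵥ a) (B *ᵥ b) := by
  funext r
  obtain ⟨⟨i, k⟩, rfl⟩ := (finProdFinEquiv : Fin 3 × Fin 2 ≃ Fin 6).surjective r
  simp only [mulVec, dotProduct, vecKron32_finProdFinEquiv]
  rw [← (finProdFinEquiv : Fin 3 × Fin 2 ≃ Fin 6).sum_comp, Fintype.sum_prod_type,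
    Finset.sum_mul_sum]
  simp only [kron32_finProdFinEquiv, vecKron32_finProdFinEquiv]
  exact Finset.sum_congr rfl fun j _ => Finset.sum_congr rfl fun l _ => by ring

lemma single_zero_zero_eq_gm3_gm8 :
    single 0 0 1 = (1 / 3 : ℂ) • 1 + (1 / 2 : ℂ) • gm3 + ((Real.sqrt 3 : ℂ) / 6) • gm8 := by
  ext i j
  fin_cases i <;> fin_cases j <;> simp [gm3, gm8, one_apply] <;> ring_nf <;> norm_num

lemma single_two_two_eq_gm8 :
    single 2 2 1 = (1 / 3 : ℂ) • 1 - ((Real.sqrt 3 : ℂ) / 3) • gm8 := by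
  ext i j
  fin_cases i <;> fin_cases j <;> simp [gm8, one_apply] <;> ring_nf <;> norm_num

lemma single_zero_one_eq_gm1_gm2 :
    single 0 1 1 = (1 / 2 : ℂ) • gm1 + (Complex.I / 2) • gm2 := by
  ext i j
  fin_cases i <;> fin_cases j <;> simp [gm1, gm2] <;> ring_nf <;> norm_num

lemma single_one_zero_eq_gm1_gm2 :
    single 1 0 1 = (1 / 2 : ℂ) • gm1 - (Complex.I / 2) • gm2 := by
  ext i j
  fin_cases i <;> fin_cases j <;> simp [gm1, gm2] <;> ring_nf <;> norm_num

lemma single_one_two_eq_gm6_gm7 :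
    single 1 2 1 = (1 / 2 : ℂ) • gm6 + (Complex.I / 2) • gm7 := by
  ext i j
  fin_cases i <;> fin_cases j <;> simp [gm6, gm7] <;> ring_nf <;> norm_num

lemma single_two_one_eq_gm6_gm7 :
    single 2 1 1 = (1 / 2 : ℂ) • gm6 - (Complex.I / 2) • gm7 := by
  ext i j
  fin_cases i <;> fin_cases j <;> simp [gm6, gm7] <;> ring_nf <;> norm_num

lemma single_zero_zero_eq_pauli3 :
    single 0 0 1 = (1 / 2 : ℂ) • 1 + (1 / 2 : ℂ) • pauli3 := by
  ext i j
  fin_cases i <;> fin_cases j <;> norm_num [pauli3, one_apply]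

lemma single_one_one_eq_pauli3 :
    single 1 1 1 = (1 / 2 : ℂ) • 1 - (1 / 2 : ℂ) • pauli3 := by
  ext i j
  fin_cases i <;> fin_cases j <;> norm_num [pauli3, one_apply]

lemma single_zero_one_eq_pauli1_pauli2 :
    single 0 1 1 = (1 / 2 : ℂ) • pauli1 + (Complex.I / 2) • pauli2 := by
  ext i j
  fin_cases i <;> fin_cases j <;> simp [pauli1, pauli2] <;> ring_nf <;> norm_num

lemma single_one_zero_eq_pauli1_pauli2 :
    single 1 0 1 = (1 / 2 : ℂ) • pauli1 - (Complex.I / 2) • pauli2 := by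
  ext i j
  fin_cases i <;> fin_cases j <;> simp [pauli1, pauli2] <;> ring_nf <;> norm_num

/-- the tensor commutation matrix `U_{3⊗2}` (the 6×6 matrix
satisfying `U(a ⊗ b) = b ⊗ a` for all `a ∈ ℂ³`, `b ∈ ℂ²`) is given in terms of
the Gell-Mann and Pauli matrices by the six-term Kronecker-product formula. -/
theorem stmt12 (U : Matrix (Fin 6) (Fin 6) ℂ)
    (hU : ∀ (a : Fin 3 → ℂ) (b : Fin 2 → ℂ), U.mulVec (vecKron32 a b) = vecKron23 b a) :
    U = kron32 ((1 / 3 : ℂ) • 1 + (1 / 2 : ℂ) • gm3 + ((Real.sqrt 3 : ℂ) / 6) • gm8)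
          ((1 / 2 : ℂ) • 1 + (1 / 2 : ℂ) • pauli3)
        + kron32 ((1 / 2 : ℂ) • gm1 + (Complex.I / 2) • gm2)
          ((1 / 2 : ℂ) • pauli1 - (Complex.I / 2) • pauli2)
        + kron32 ((1 / 2 : ℂ) • gm6 + (Complex.I / 2) • gm7)
          ((1 / 2 : ℂ) • 1 + (1 / 2 : ℂ) • pauli3)
        + kron32 ((1 / 2 : ℂ) • gm1 - (Complex.I / 2) • gm2)
          ((1 / 2 : ℂ) • 1 - (1 / 2 : ℂ) • pauli3)
        + kron32 ((1 / 2 : ℂ) • gm6 - (Complex.I / 2) • gm7)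
          ((1 / 2 : ℂ) • pauli1 + (Complex.I / 2) • pauli2)
        + kron32 ((1 / 3 : ℂ) • 1 - ((Real.sqrt 3 : ℂ) / 3) • gm8)
          ((1 / 2 : ℂ) • 1 - (1 / 2 : ℂ) • pauli3) := by
  refine ext_of_mulVec_vecKron32 fun a b => ?_
  rw [hU, ← single_zero_zero_eq_gm3_gm8, ← single_two_two_eq_gm8, ← single_zero_one_eq_gm1_gm2,
    ← single_one_zero_eq_gm1_gm2, ← single_one_two_eq_gm6_gm7, ← single_two_one_eq_gm6_gm7,
    ← single_zero_zero_eq_pauli3, ← single_one_one_eq_pauli3, ← single_zero_one_eq_pauli1_pauli2,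
    ← single_one_zero_eq_pauli1_pauli2]
  simp only [add_mulVec, kron32_mulVec_vecKron32, single_mulVec]
  funext r
  fin_cases r <;> simp [vecKron32, vecKron23, mul_comm]
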